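/- arXiv:2501.13408 — 2 statements merged into one kernel-verified Lean document; each statement's English description precedes it below -/
import Mathlib

section
/- Let (T, Γ) be a Γ-semigroup with zero 0 and let H be a 0-least Γ-two-sided ideal of T with HΓH ≠ {0} that contains at least one 0-least Γ-left ideal of T. Then every Γ-left ideal of H (i.e., every nonempty subset M ⊆ H with HΓM ⊆ M) is a Γ-left ideal of T (i.e., satisfies TΓM ⊆ M). -/
/-- The set product AΓB = {aγb : a ∈ A, γ ∈ Γ, b ∈ B} for a Γ-semigroup
with multiplication `mul : T → G → T → T`. -/
def gprod {T G : Type*} (mul : T → G → T → T) (A B : Set T) : Set T :=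
  {x | ∃ a ∈ A, ∃ γ : G, ∃ b ∈ B, x = mul a γ b}

/-- A nonempty subset B with TΓB ⊆ B. -/
def IsLeftIdeal {T G : Type*} (mul : T → G → T → T) (B : Set T) : Prop :=
  B.Nonempty ∧ gprod mul Set.univ B ⊆ B

/-- A nonempty subset B with BΓT ⊆ B. -/
def IsRightIdeal {T G : Type*} (mul : T → G → T → T) (B : Set T) : Prop :=
  B.Nonempty ∧ gprod mul B Set.univ ⊆ B

/-- A Γ-two-sided ideal. -/
def IsTwoSidedIdeal {T G : Type*} (mul : T → G → T → T) (B : Set T) : Prop :=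
  IsLeftIdeal mul B ∧ IsRightIdeal mul B

/-- z is a zero element: eαz = zαe = z for all e, α. -/
def IsZero {T G : Type*} (mul : T → G → T → T) (z : T) : Prop :=
  ∀ (e : T) (α : G), mul e α z = z ∧ mul z α e = z

/-- A least Γ-left ideal: every Γ-left ideal contained in it equals it. -/
def IsLeastLeftIdeal {T G : Type*} (mul : T → G → T → T) (H : Set T) : Prop :=
  IsLeftIdeal mul H ∧ ∀ B : Set T, IsLeftIdeal mul B → B ⊆ H → B = H

/-- A least Γ-two-sided ideal. -/
def IsLeastTwoSidedIdeal {T G : Type*} (mul : T → G → T → T) (A : Set T) : Prop :=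
  IsTwoSidedIdeal mul A ∧ ∀ B : Set T, IsTwoSidedIdeal mul B → B ⊆ A → B = A

/-- A 0-least Γ-left ideal. -/
def IsZeroLeastLeftIdeal {T G : Type*} (mul : T → G → T → T) (z : T) (H : Set T) : Prop :=
  IsLeftIdeal mul H ∧ H ≠ {z} ∧
    ∀ B : Set T, IsLeftIdeal mul B → B ⊆ H → B = {z} ∨ B = H

/-- A 0-least Γ-right ideal. -/
def IsZeroLeastRightIdeal {T G : Type*} (mul : T → G → T → T) (z : T) (H : Set T) : Prop :=
  IsRightIdeal mul H ∧ H ≠ {z} ∧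
    ∀ B : Set T, IsRightIdeal mul B → B ⊆ H → B = {z} ∨ B = H

/-- A 0-least Γ-two-sided ideal. -/
def IsZeroLeastTwoSidedIdeal {T G : Type*} (mul : T → G → T → T) (z : T) (H : Set T) : Prop :=
  IsTwoSidedIdeal mul H ∧ H ≠ {z} ∧
    ∀ B : Set T, IsTwoSidedIdeal mul B → B ⊆ H → B = {z} ∨ B = H

/-- 0-simple: TΓT ≠ {0} and the only Γ-two-sided ideals are {0} and T. -/
def IsZeroSimple {T G : Type*} (mul : T → G → T → T) (z : T) : Prop :=
  gprod mul Set.univ Set.univ ≠ {z} ∧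
    ∀ B : Set T, IsTwoSidedIdeal mul B → B = {z} ∨ B = Set.univ

/-- e is an idempotent: eαe = e for some α. -/
def IsIdempotent {T G : Type*} (mul : T → G → T → T) (e : T) : Prop :=
  ∃ α : G, mul e α e = e

/-- The partial order on idempotents: e ≤ f iff exf = fye = e for some x, y ∈ Γ. -/
def IdemLe {T G : Type*} (mul : T → G → T → T) (e f : T) : Prop :=
  ∃ x y : G, mul e x f = e ∧ mul f y e = e

/-- A primitive idempotent: nonzero, and minimal among nonzero idempotents. -/
def IsPrimitiveIdempotent {T G : Type*} (mul : T → G → T → T) (z e : T) : Prop :=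
  e ≠ z ∧ IsIdempotent mul e ∧
    ∀ f : T, f ≠ z → IsIdempotent mul f → IdemLe mul f e → f = e

/-- Completely 0-simple: 0-simple with a primitive idempotent. -/
def IsCompletelyZeroSimple {T G : Type*} (mul : T → G → T → T) (z : T) : Prop :=
  IsZeroSimple mul z ∧ ∃ e : T, IsPrimitiveIdempotent mul z e

/-- Green's relation L: e L f iff {e} ∪ TΓe = {f} ∪ TΓf. -/
def LRel {T G : Type*} (mul : T → G → T → T) (e f : T) : Prop :=
  insert e (gprod mul Set.univ {e}) = insert f (gprod mul Set.univ {f})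

/-- Green's relation R: e R f iff {e} ∪ eΓT = {f} ∪ fΓT. -/
def RRel {T G : Type*} (mul : T → G → T → T) (e f : T) : Prop :=
  insert e (gprod mul {e} Set.univ) = insert f (gprod mul {f} Set.univ)

/-- Green's relation D = L ∘ R. -/
def DRel {T G : Type*} (mul : T → G → T → T) (e f : T) : Prop :=
  ∃ c : T, LRel mul e c ∧ RRel mul c f

/-- The Γ-two-sided ideal generated by e: {e} ∪ TΓe ∪ eΓT ∪ TΓeΓT. -/
def GenTwo {T G : Type*} (mul : T → G → T → T) (e : T) : Set T :=
  {e} ∪ gprod mul Set.univ {e} ∪ gprod mul {e} Set.univ ∪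
    gprod mul (gprod mul Set.univ {e}) Set.univ

/-- A Γ-prime ideal. -/
def IsPrimeIdeal {T G : Type*} (mul : T → G → T → T) (Q : Set T) : Prop :=
  IsTwoSidedIdeal mul Q ∧
    ∀ E F : Set T, IsTwoSidedIdeal mul E → IsTwoSidedIdeal mul F →
      gprod mul E F ⊆ Q → E ⊆ Q ∨ F ⊆ Q

/-- A Γ-two-sided ideal of the Γ-semigroup H (a subset of T closed as an ideal of H). -/
def IsTwoSidedIdealIn {T G : Type*} (mul : T → G → T → T) (H B : Set T) : Prop :=
  B.Nonempty ∧ B ⊆ H ∧ gprod mul H B ⊆ B ∧ gprod mul B H ⊆ B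

/-!
The union of the 0-least left ideals of `T` inside `H` is a two-sided ideal: a right translate
of a 0-least left ideal is `{0}` or again 0-least. By minimality of `H` they fill `H`.
The left annihilator of `H` in `H` is also a two-sided ideal inside `H`; since `HΓH ≠ {0}` it is
`{0}`. So for `0 ≠ m ∈ H`, lying in a 0-least left ideal `L`, the left ideal `HΓm ⊆ L` is not `{0}`
and hence equals `L`, which gives `TΓm ⊆ L = HΓm ⊆ HΓM`.
-/

section

variable {T G : Type*} {mul : T → G → T → T} {z : T}

lemma IsZero.mem_of_isLeftIdeal (hz : IsZero mul z) {B : Set T} (hB : IsLeftIdeal mul B)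
    (γ : G) : z ∈ B := by
  obtain ⟨b, hb⟩ := hB.1
  simpa only [(hz b γ).2] using hB.2 ⟨z, trivial, γ, b, hb, rfl⟩

lemma IsZeroLeastLeftIdeal.image_mul_right
    (assoc : ∀ (e f g : T) (α β : G), mul (mul e α f) β g = mul e α (mul f β g))
    (hz : IsZero mul z) {L : Set T} (hL : IsZeroLeastLeftIdeal mul z L) (α : G) (t : T) :
    (fun l => mul l α t) '' L = {z} ∨
      IsZeroLeastLeftIdeal mul z ((fun l => mul l α t) '' L) := by
  have hleft : IsLeftIdeal mul ((fun l => mul l α t) '' L) := by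
    refine ⟨hL.1.1.image _, ?_⟩
    rintro _ ⟨s, -, β, _, ⟨l, hl, rfl⟩, rfl⟩
    exact ⟨mul s β l, hL.1.2 ⟨s, trivial, β, l, hl, rfl⟩, assoc _ _ _ _ _⟩
  refine or_iff_not_imp_left.2 fun hne => ⟨hleft, hne, fun B hB hBsub => ?_⟩
  refine or_iff_not_imp_left.2 fun hBz => hBsub.antisymm ?_
  obtain ⟨b, hb, hbz⟩ : ∃ b ∈ B, b ≠ z := by
    by_contra! h
    exact hBz (Set.eq_singleton_iff_nonempty_unique_mem.2 ⟨hB.1, h⟩)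
  obtain ⟨l, hl, rfl⟩ := hBsub hb
  have hK : IsLeftIdeal mul {l ∈ L | mul l α t ∈ B} := by
    refine ⟨⟨l, hl, hb⟩, ?_⟩
    rintro _ ⟨s, -, β, k, ⟨hk, hkB⟩, rfl⟩
    exact ⟨hL.1.2 ⟨s, trivial, β, k, hk, rfl⟩, (assoc _ _ _ _ _).symm ▸
      hB.2 ⟨s, trivial, β, _, hkB, rfl⟩⟩
  have hlz : l ≠ z := by
    rintro rfl
    exact hbz (hz t α).2
  have hKL : {l ∈ L | mul l α t ∈ B} = L :=
    (hL.2.2 _ hK (Set.sep_subset _ _)).resolve_left fun h => hlz (h ▸ ⟨hl, hb⟩ : l ∈ ({z} : Set T))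
  rintro _ ⟨k, hk, rfl⟩
  exact (hKL.symm ▸ hk : k ∈ {l ∈ L | mul l α t ∈ B}).2

def leftAnnihilatorIn (mul : T → G → T → T) (z : T) (H : Set T) : Set T :=
  {a ∈ H | ∀ h ∈ H, ∀ β, mul h β a = z}

lemma isTwoSidedIdeal_leftAnnihilatorIn [Nonempty G]
    (assoc : ∀ (e f g : T) (α β : G), mul (mul e α f) β g = mul e α (mul f β g))
    (hz : IsZero mul z) {H : Set T} (hH : IsTwoSidedIdeal mul H) :
    IsTwoSidedIdeal mul (leftAnnihilatorIn mul z H) := by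
  obtain ⟨γ⟩ := ‹Nonempty G›
  have hzA : z ∈ leftAnnihilatorIn mul z H :=
    ⟨hz.mem_of_isLeftIdeal hH.1 γ, fun h _ β => (hz h β).1⟩
  refine ⟨⟨⟨z, hzA⟩, ?_⟩, ⟨⟨z, hzA⟩, ?_⟩⟩
  · rintro _ ⟨s, -, β, a, ⟨ha, hann⟩, rfl⟩
    refine ⟨hH.1.2 ⟨s, trivial, β, a, ha, rfl⟩, fun h hh δ => ?_⟩
    rw [← assoc]
    exact hann _ (hH.2.2 ⟨h, hh, δ, s, trivial, rfl⟩) β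
  · rintro _ ⟨a, ⟨ha, hann⟩, β, s, -, rfl⟩
    refine ⟨hH.2.2 ⟨a, ha, β, s, trivial, rfl⟩, fun h hh δ => ?_⟩
    rw [← assoc, hann h hh δ, (hz s β).2]

lemma IsZeroLeastTwoSidedIdeal.exists_mul_ne_zero [Nonempty G]
    (assoc : ∀ (e f g : T) (α β : G), mul (mul e α f) β g = mul e α (mul f β g))
    (hz : IsZero mul z) {H : Set T} (hH : IsZeroLeastTwoSidedIdeal mul z H)
    (hHH : gprod mul H H ≠ {z}) {m : T} (hm : m ∈ H) (hmz : m ≠ z) :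
    ∃ h ∈ H, ∃ β, mul h β m ≠ z := by
  by_contra! hcon
  have hA : leftAnnihilatorIn mul z H = H :=
    (hH.2.2 _ (isTwoSidedIdeal_leftAnnihilatorIn assoc hz hH.1) (Set.sep_subset _ _)).resolve_left
      fun h => hmz (h ▸ ⟨hm, hcon⟩ : m ∈ ({z} : Set T))
  obtain ⟨γ⟩ := ‹Nonempty G›
  refine hHH (Set.eq_singleton_iff_nonempty_unique_mem.2 ⟨⟨_, m, hm, γ, m, hm, rfl⟩, ?_⟩)
  rintro _ ⟨h, hh, β, a, ha, rfl⟩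
  exact (hA.symm ▸ ha : a ∈ leftAnnihilatorIn mul z H).2 h hh β

lemma IsZeroLeastTwoSidedIdeal.sUnion_zeroLeastLeftIdeals
    (assoc : ∀ (e f g : T) (α β : G), mul (mul e α f) β g = mul e α (mul f β g))
    (hz : IsZero mul z) {H : Set T} (hH : IsZeroLeastTwoSidedIdeal mul z H)
    (hex : ∃ L : Set T, IsZeroLeastLeftIdeal mul z L ∧ L ⊆ H) :
    ⋃₀ {L | IsZeroLeastLeftIdeal mul z L ∧ L ⊆ H} = H := by
  obtain ⟨L₀, hL₀, hL₀H⟩ := hex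
  set U := ⋃₀ {L | IsZeroLeastLeftIdeal mul z L ∧ L ⊆ H}
  have hL₀U : L₀ ⊆ U := Set.subset_sUnion_of_mem ⟨hL₀, hL₀H⟩
  have hUne : U.Nonempty := hL₀.1.1.mono hL₀U
  have hleft : IsLeftIdeal mul U := by
    refine ⟨hUne, ?_⟩
    rintro _ ⟨s, -, β, x, ⟨L, hL, hxL⟩, rfl⟩
    exact ⟨L, hL, hL.1.1.2 ⟨s, trivial, β, x, hxL, rfl⟩⟩
  have hright : IsRightIdeal mul U := by
    refine ⟨hUne, ?_⟩
    rintro _ ⟨x, ⟨L, ⟨hL, hLH⟩, hxL⟩, β, s, -, rfl⟩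
    have hx : mul x β s ∈ (fun l => mul l β s) '' L := ⟨x, hxL, rfl⟩
    rcases hL.image_mul_right assoc hz β s with h | h
    · exact ⟨L, ⟨hL, hLH⟩, (Set.mem_singleton_iff.1 (h ▸ hx)).symm ▸ hz.mem_of_isLeftIdeal hL.1 β⟩
    · refine ⟨_, ⟨h, ?_⟩, hx⟩
      rintro _ ⟨l, hl, rfl⟩
      exact hH.1.2.2 ⟨l, hLH hl, β, s, trivial, rfl⟩
  refine (hH.2.2 U ⟨hleft, hright⟩ (Set.sUnion_subset fun L hL => hL.2)).resolve_left
    fun hU => hL₀.2.1 (hL₀.1.1.subset_singleton_iff.1 (hU ▸ hL₀U))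

lemma IsZeroLeastLeftIdeal.gprod_singleton_eq
    (assoc : ∀ (e f g : T) (α β : G), mul (mul e α f) β g = mul e α (mul f β g))
    {L H : Set T} (hL : IsZeroLeastLeftIdeal mul z L) (hH : gprod mul Set.univ H ⊆ H)
    {m : T} (hm : m ∈ L) (hne : ∃ h ∈ H, ∃ β, mul h β m ≠ z) :
    gprod mul H {m} = L := by
  obtain ⟨h, hh, β, hβ⟩ := hne
  have hleft : IsLeftIdeal mul (gprod mul H {m}) := by
    refine ⟨⟨_, h, hh, β, m, rfl, rfl⟩, ?_⟩
    rintro _ ⟨s, -, γ, _, ⟨k, hk, δ, _, rfl, rfl⟩, rfl⟩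
    exact ⟨mul s γ k, hH ⟨s, trivial, γ, k, hk, rfl⟩, δ, _, rfl, (assoc _ _ _ _ _).symm⟩
  have hsub : gprod mul H {m} ⊆ L := by
    rintro _ ⟨k, -, δ, _, rfl, rfl⟩
    exact hL.1.2 ⟨k, trivial, δ, _, hm, rfl⟩
  exact (hL.2.2 _ hleft hsub).resolve_left
    fun hz => hβ (hz ▸ ⟨h, hh, β, m, rfl, rfl⟩ : mul h β m ∈ ({z} : Set T))

end

theorem leftIdeal_of_H_is_leftIdeal_of_T_general {T G : Type*}
    (mul : T → G → T → T)
    (assoc : ∀ (e f g : T) (α β : G), mul (mul e α f) β g = mul e α (mul f β g))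
    (z : T) (hz : IsZero mul z)
    (H : Set T) (hH : IsZeroLeastTwoSidedIdeal mul z H)
    (hHH : gprod mul H H ≠ {z})
    (hex : ∃ L : Set T, IsZeroLeastLeftIdeal mul z L ∧ L ⊆ H) :
    ∀ M : Set T, M ⊆ H → M.Nonempty → gprod mul H M ⊆ M →
      gprod mul Set.univ M ⊆ M := by
  rintro M hMH - hHM _ ⟨t, -, α, m, hm, rfl⟩
  have : Nonempty G := ⟨α⟩
  by_cases hmz : m = z
  · have hzM : z ∈ M := by
      simpa only [(hz m α).2] using hHM ⟨z, hz.mem_of_isLeftIdeal hH.1.1 α, α, m, hm, rfl⟩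
    rwa [hmz, (hz t α).1]
  obtain ⟨L, ⟨hL, -⟩, hmL⟩ : m ∈ ⋃₀ {L | IsZeroLeastLeftIdeal mul z L ∧ L ⊆ H} :=
    (hH.sUnion_zeroLeastLeftIdeals assoc hz hex).symm ▸ hMH hm
  have hLm : gprod mul H {m} = L := hL.gprod_singleton_eq assoc hH.1.1.2 hmL
    (hH.exists_mul_ne_zero assoc hz hHH (hMH hm) hmz)
  obtain ⟨h, hh, β, _, rfl, he⟩ := hLm ▸ hL.1.2 ⟨t, trivial, α, m, hmL, rfl⟩
  exact he ▸ hHM ⟨h, hh, β, _, hm, rfl⟩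

theorem leftIdeal_of_H_is_leftIdeal_of_T {T G : Type*} [Nonempty T] [Nonempty G]
    (mul : T → G → T → T)
    (assoc : ∀ (e f g : T) (α β : G), mul (mul e α f) β g = mul e α (mul f β g))
    (z : T) (hz : IsZero mul z)
    (H : Set T) (hH : IsZeroLeastTwoSidedIdeal mul z H)
    (hHH : gprod mul H H ≠ {z})
    (hex : ∃ L : Set T, IsZeroLeastLeftIdeal mul z L ∧ L ⊆ H) :
    ∀ M : Set T, M ⊆ H → M.Nonempty → gprod mul H M ⊆ M →
      gprod mul Set.univ M ⊆ M :=
  leftIdeal_of_H_is_leftIdeal_of_T_general mul assoc z hz H hH hHH hex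
end

section
/- Let (T, Γ) be a 0-simple Γ-semigroup with zero 0, let H be a 0-least Γ-left ideal of T and I a 0-least Γ-right ideal of T with HΓI ≠ {0}. Then IΓH = I ∩ H. -/
/-!
`HΓI` is a two-sided ideal other than `{0}`, hence all of `T`. A nonzero element `b` of a
0-least right ideal `I` generates it, `bΓT = I`: otherwise `b` lies in the left annihilator of
`T`, a two-sided ideal other than `{0}`, which forces `TΓT = {0}`; dually `TΓb = H` for
`0 ≠ b ∈ H`. If `IΓH` were `{0}`, so would be `TΓT = (HΓI)Γ(HΓI)`; hence some `c ≠ 0` lies in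
`IΓH`, and writing `c = iγh` with `i ∈ cΓT`, `h ∈ TΓc` gives `c = cα(uβc)`. Every `a ∈ I ∩ H`
is of the form `cσw`, so `a = cα(uβa) ∈ IΓH`.
-/

def IsGammaAssoc {T G : Type*} (mul : T → G → T → T) : Prop :=
  ∀ (e f g : T) (α β : G), mul (mul e α f) β g = mul e α (mul f β g)

def opMul {T G : Type*} (mul : T → G → T → T) : T → G → T → T :=
  fun a γ b => mul b γ a

def leftAnnihilator {T G : Type*} (mul : T → G → T → T) (z : T) : Set T :=
  {x | ∀ (γ : G) (t : T), mul x γ t = z}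

section GammaSemigroup

variable {T G : Type*} {mul : T → G → T → T} {z : T}

lemma mem_gprod_singleton_univ {b x : T} :
    x ∈ gprod mul {b} Set.univ ↔ ∃ (γ : G) (t : T), x = mul b γ t := by
  simp [gprod]

lemma mem_gprod_univ_singleton {b x : T} :
    x ∈ gprod mul Set.univ {b} ↔ ∃ (t : T) (γ : G), x = mul t γ b := by
  simp [gprod]

lemma gprod_mono {A A' B B' : Set T} (hA : A ⊆ A') (hB : B ⊆ B') :
    gprod mul A B ⊆ gprod mul A' B' := by
  rintro x ⟨a, ha, γ, b, hb, rfl⟩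
  exact ⟨a, hA ha, γ, b, hB hb, rfl⟩

lemma gprod_subset_inter {I H : Set T} (hI : IsRightIdeal mul I) (hH : IsLeftIdeal mul H) :
    gprod mul I H ⊆ I ∩ H := fun _ hx =>
  ⟨hI.2 (gprod_mono subset_rfl (Set.subset_univ _) hx),
    hH.2 (gprod_mono (Set.subset_univ _) subset_rfl hx)⟩

lemma gprod_opMul (A B : Set T) : gprod (opMul mul) A B = gprod mul B A := by
  ext x
  constructor <;> rintro ⟨a, ha, γ, b, hb, rfl⟩ <;> exact ⟨b, hb, γ, a, ha, rfl⟩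

lemma isLeftIdeal_opMul {B : Set T} : IsLeftIdeal (opMul mul) B ↔ IsRightIdeal mul B := by
  rw [IsLeftIdeal, IsRightIdeal, gprod_opMul]

lemma isRightIdeal_opMul {B : Set T} : IsRightIdeal (opMul mul) B ↔ IsLeftIdeal mul B := by
  rw [IsLeftIdeal, IsRightIdeal, gprod_opMul]

lemma isTwoSidedIdeal_opMul {B : Set T} :
    IsTwoSidedIdeal (opMul mul) B ↔ IsTwoSidedIdeal mul B := by
  rw [IsTwoSidedIdeal, IsTwoSidedIdeal, isLeftIdeal_opMul, isRightIdeal_opMul, and_comm]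

lemma IsGammaAssoc.opMul (assoc : IsGammaAssoc mul) : IsGammaAssoc (opMul mul) :=
  fun e f g α β => (assoc g f e β α).symm

lemma IsZero.opMul (hz : IsZero mul z) : IsZero (opMul mul) z :=
  fun e α => (hz e α).symm

lemma IsZeroSimple.opMul (hzs : IsZeroSimple mul z) : IsZeroSimple (opMul mul) z :=
  ⟨by rw [gprod_opMul]; exact hzs.1, fun B hB => hzs.2 B (isTwoSidedIdeal_opMul.1 hB)⟩

lemma IsZeroLeastLeftIdeal.opMul {H : Set T} (hH : IsZeroLeastLeftIdeal mul z H) :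
    IsZeroLeastRightIdeal (opMul mul) z H :=
  ⟨isRightIdeal_opMul.2 hH.1, hH.2.1, fun B hB hBH => hH.2.2 B (isRightIdeal_opMul.1 hB) hBH⟩

lemma isTwoSidedIdeal_gprod [Nonempty G] (assoc : IsGammaAssoc mul) {H I : Set T}
    (hH : IsLeftIdeal mul H) (hI : IsRightIdeal mul I) :
    IsTwoSidedIdeal mul (gprod mul H I) := by
  obtain ⟨γ⟩ := ‹Nonempty G›
  obtain ⟨⟨h, hh⟩, ⟨i, hi⟩⟩ := And.intro hH.1 hI.1
  have hne : (gprod mul H I).Nonempty := ⟨mul h γ i, h, hh, γ, i, hi, rfl⟩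
  refine ⟨⟨hne, ?_⟩, ⟨hne, ?_⟩⟩
  · rintro x ⟨t, -, δ, y, ⟨h, hh, γ, i, hi, rfl⟩, rfl⟩
    exact ⟨mul t δ h, hH.2 ⟨t, trivial, δ, h, hh, rfl⟩, γ, i, hi, (assoc t h i δ γ).symm⟩
  · rintro x ⟨y, ⟨h, hh, γ, i, hi, rfl⟩, δ, t, -, rfl⟩
    exact ⟨h, hh, γ, mul i δ t, hI.2 ⟨i, hi, δ, t, trivial, rfl⟩, assoc h i t γ δ⟩

lemma isRightIdeal_gprod_singleton_univ [Nonempty G] (assoc : IsGammaAssoc mul) (b : T) :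
    IsRightIdeal mul (gprod mul {b} Set.univ) := by
  obtain ⟨γ⟩ := ‹Nonempty G›
  refine ⟨⟨mul b γ b, mem_gprod_singleton_univ.2 ⟨γ, b, rfl⟩⟩, ?_⟩
  rintro x ⟨y, hy, δ, s, -, rfl⟩
  obtain ⟨γ, t, rfl⟩ := mem_gprod_singleton_univ.1 hy
  exact mem_gprod_singleton_univ.2 ⟨γ, mul t δ s, assoc b t s γ δ⟩

lemma isTwoSidedIdeal_leftAnnihilator (assoc : IsGammaAssoc mul) (hz : IsZero mul z) :
    IsTwoSidedIdeal mul (leftAnnihilator mul z) := by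
  have hne : (leftAnnihilator mul z).Nonempty := ⟨z, fun γ t => (hz t γ).2⟩
  refine ⟨⟨hne, ?_⟩, ⟨hne, ?_⟩⟩
  · rintro x ⟨s, -, γ, y, hy, rfl⟩ δ t
    rw [assoc, hy, (hz s γ).1]
  · rintro x ⟨y, hy, γ, s, -, rfl⟩ δ t
    rw [assoc, hy]

lemma IsZeroSimple.exists_mul_ne [Nonempty G] (hzs : IsZeroSimple mul z) :
    ∃ (s : T) (γ : G) (t : T), mul s γ t ≠ z := by
  obtain ⟨γ⟩ := ‹Nonempty G›
  by_contra! hzero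
  refine hzs.1 (Set.eq_singleton_iff_unique_mem.2 ⟨?_, ?_⟩)
  · exact ⟨z, trivial, γ, z, trivial, (hzero z γ z).symm⟩
  · rintro x ⟨s, -, γ, t, -, rfl⟩
    exact hzero s γ t

lemma IsZeroSimple.leftAnnihilator_eq [Nonempty G] (assoc : IsGammaAssoc mul)
    (hz : IsZero mul z) (hzs : IsZeroSimple mul z) : leftAnnihilator mul z = {z} := by
  refine (hzs.2 _ (isTwoSidedIdeal_leftAnnihilator assoc hz)).resolve_right fun huniv => ?_
  obtain ⟨s, γ, t, hst⟩ := hzs.exists_mul_ne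
  exact hst ((huniv ▸ Set.mem_univ s : s ∈ leftAnnihilator mul z) γ t)

lemma IsZeroLeastRightIdeal.gprod_singleton_univ_eq [Nonempty G] (assoc : IsGammaAssoc mul)
    (hz : IsZero mul z) (hzs : IsZeroSimple mul z) {I : Set T}
    (hI : IsZeroLeastRightIdeal mul z I) {b : T} (hb : b ∈ I) (hbz : b ≠ z) :
    gprod mul {b} Set.univ = I := by
  have hsub : gprod mul {b} Set.univ ⊆ I := fun _ hx =>
    hI.1.2 (gprod_mono (Set.singleton_subset_iff.2 hb) subset_rfl hx)
  refine (hI.2.2 _ (isRightIdeal_gprod_singleton_univ assoc b) hsub).resolve_left fun hbot => ?_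
  have hann : b ∈ leftAnnihilator mul z := fun γ t =>
    hbot.subset (mem_gprod_singleton_univ.2 ⟨γ, t, rfl⟩)
  rw [hzs.leftAnnihilator_eq assoc hz] at hann
  exact hbz hann

lemma IsZeroLeastLeftIdeal.gprod_univ_singleton_eq [Nonempty G] (assoc : IsGammaAssoc mul)
    (hz : IsZero mul z) (hzs : IsZeroSimple mul z) {H : Set T}
    (hH : IsZeroLeastLeftIdeal mul z H) {b : T} (hb : b ∈ H) (hbz : b ≠ z) :
    gprod mul Set.univ {b} = H := by
  simpa only [gprod_opMul] using
    hH.opMul.gprod_singleton_univ_eq assoc.opMul hz.opMul hzs.opMul hb hbz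

lemma exists_mem_gprod_ne_zero [Nonempty G] (assoc : IsGammaAssoc mul) (hz : IsZero mul z)
    (hzs : IsZeroSimple mul z) {H I : Set T} (hHI : gprod mul H I = Set.univ) :
    ∃ c ∈ gprod mul I H, c ≠ z := by
  by_contra! hzero
  obtain ⟨s, γ, t, hst⟩ := hzs.exists_mul_ne
  obtain ⟨h, -, α, i, hi, rfl⟩ : s ∈ gprod mul H I := hHI ▸ trivial
  obtain ⟨h', hh', β, i', -, rfl⟩ : t ∈ gprod mul H I := hHI ▸ trivial
  apply hst
  rw [assoc, ← assoc i h' i', hzero _ ⟨i, hi, γ, h', hh', rfl⟩, (hz i' β).2, (hz h α).1]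

lemma exists_eq_mul_mul_of_mem_gprod [Nonempty G] (assoc : IsGammaAssoc mul)
    (hz : IsZero mul z) (hzs : IsZeroSimple mul z) {I H : Set T}
    (hI : IsZeroLeastRightIdeal mul z I) (hH : IsZeroLeastLeftIdeal mul z H) {c : T}
    (hc : c ∈ gprod mul I H) (hcz : c ≠ z) :
    ∃ (α : G) (u : T) (β : G), c = mul c α (mul u β c) := by
  obtain ⟨hcI, hcH⟩ := gprod_subset_inter hI.1 hH.1 hc
  obtain ⟨i, hi, γ, h, hh, hc⟩ := hc
  rw [← hI.gprod_singleton_univ_eq assoc hz hzs hcI hcz] at hi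
  rw [← hH.gprod_univ_singleton_eq assoc hz hzs hcH hcz] at hh
  obtain ⟨α, t, rfl⟩ := mem_gprod_singleton_univ.1 hi
  obtain ⟨s, β, rfl⟩ := mem_gprod_univ_singleton.1 hh
  exact ⟨α, mul t γ s, β, hc.trans (by rw [assoc, assoc])⟩

end GammaSemigroup

theorem IGH_eq_inter_general {T G : Type*} [Nonempty G]
    (mul : T → G → T → T)
    (assoc : ∀ (e f g : T) (α β : G), mul (mul e α f) β g = mul e α (mul f β g))
    (z : T) (hz : IsZero mul z)
    (hzs : IsZeroSimple mul z)
    (H : Set T) (hH : IsZeroLeastLeftIdeal mul z H)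
    (I : Set T) (hI : IsZeroLeastRightIdeal mul z I)
    (hHI : gprod mul H I ≠ {z}) :
    gprod mul I H = I ∩ H := by
  refine (gprod_subset_inter hI.1 hH.1).antisymm ?_
  have hHI_univ : gprod mul H I = Set.univ :=
    (hzs.2 _ (isTwoSidedIdeal_gprod assoc hH.1 hI.1)).resolve_left hHI
  obtain ⟨c, hc, hcz⟩ := exists_mem_gprod_ne_zero assoc hz hzs hHI_univ
  obtain ⟨hcI, -⟩ := gprod_subset_inter hI.1 hH.1 hc
  obtain ⟨α, u, β, hcu⟩ := exists_eq_mul_mul_of_mem_gprod assoc hz hzs hI hH hc hcz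
  rintro a ⟨haI, haH⟩
  rw [← hI.gprod_singleton_univ_eq assoc hz hzs hcI hcz] at haI
  obtain ⟨σ, w, rfl⟩ := mem_gprod_singleton_univ.1 haI
  refine ⟨c, hcI, α, mul u β (mul c σ w), hH.1.2 ⟨u, trivial, β, _, haH, rfl⟩, ?_⟩
  rw [← assoc u c w β σ, ← assoc c _ w α σ, ← hcu]

theorem IGH_eq_inter {T G : Type*} [Nonempty T] [Nonempty G]
    (mul : T → G → T → T)
    (assoc : ∀ (e f g : T) (α β : G), mul (mul e α f) β g = mul e α (mul f β g))
    (z : T) (hz : IsZero mul z)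
    (hzs : IsZeroSimple mul z)
    (H : Set T) (hH : IsZeroLeastLeftIdeal mul z H)
    (I : Set T) (hI : IsZeroLeastRightIdeal mul z I)
    (hHI : gprod mul H I ≠ {z}) :
    gprod mul I H = I ∩ H :=
  IGH_eq_inter_general mul assoc z hz hzs H hH I hI hHI
end
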